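/- The joint distribution of the largest observed and largest uncensored times satisfies, for 0 ≤ t < x ≤ τ_H: P(M_u(n) ≤ t, M(n) ≤ x) = (∫_t^x F̄*(z) dG(z) + H(t))^n. -/

import Mathlib

open MeasureTheory ProbabilityTheory Filter Set
open scoped ENNReal

noncomputable def stieltjesOf (f : ℝ → ℝ) (hm : Monotone f) (hc : Continuous f) :
    StieltjesFunction ℝ := ⟨f, hm, fun _ => hc.continuousWithinAt⟩

/-!
The event `{M_u(n) ≤ t, M(n) ≤ x}` is the intersection over `i` of the events "if the `i`-th
time is uncensored it is at most `t`, and it is at most `x`", so by independence of the pairs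
its probability is the `n`-th power of the probability of one such event. For a single pair
this event splits disjointly into `{T* ∧ U ≤ t}`, of probability `1 - F̄*(t) Ḡ(t) = H(t)`, and
`{t < U ≤ x, U < T*}`, whose probability `∫_{(t,x]} F̄*(u) dG(u)` is obtained by integrating
the survival function of `T*` against the law of `U` (Fubini on the product law).
-/

open scoped Topology

lemma tendsto_atBot_of_eq_zero_of_nonpos {f : ℝ → ℝ} (h0 : ∀ x ≤ (0 : ℝ), f x = 0) :
    Tendsto f atBot (𝓝 0) :=
  tendsto_const_nhds.congr' <| (eventually_le_atBot 0).mono fun x hx => (h0 x hx).symm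

lemma stieltjesOf_measure_Iic {f : ℝ → ℝ} (hm : Monotone f) (hc : Continuous f)
    (hbot : Tendsto f atBot (𝓝 0)) (x : ℝ) :
    (stieltjesOf f hm hc).measure (Iic x) = ENNReal.ofReal (f x) := by
  simpa [stieltjesOf] using (stieltjesOf f hm hc).measure_Iic hbot x

lemma ENNReal.preimage_ofReal_Ioc {t x : ℝ} (ht : 0 ≤ t) :
    ENNReal.ofReal ⁻¹' Ioc (ENNReal.ofReal t) (ENNReal.ofReal x) = Ioc t x := by
  ext r
  simp only [mem_preimage, mem_Ioc, ENNReal.ofReal_lt_ofReal_iff', ENNReal.ofReal_le_ofReal_iff']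
  constructor
  · rintro ⟨⟨htr, hr⟩, hrx | hr'⟩
    · exact ⟨htr, hrx⟩
    · exact absurd hr' hr.not_ge
  · rintro ⟨htr, hrx⟩
    exact ⟨⟨htr, ht.trans_lt htr⟩, Or.inl hrx⟩

section Order

variable {α : Type*} [LinearOrder α]

/-- For a pair `q = (T*, U)` with observed time `T = T* ∧ U` and indicator `C = 1{T* ≤ U}`,
`q ∈ jointMaxSet s r` says `C T ≤ s` and `T ≤ r`. -/
def jointMaxSet (s r : α) : Set (α × α) :=
  {q | (q.1 ≤ q.2 → q.1 ≤ s) ∧ min q.1 q.2 ≤ r}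

lemma jointMaxSet_eq_union {s r : α} (hsr : s ≤ r) :
    jointMaxSet s r = {q | min q.1 q.2 ≤ s} ∪ {q | q.2 < q.1 ∧ q.2 ∈ Ioc s r} := by
  ext ⟨a, b⟩
  simp only [jointMaxSet, mem_ofPred_eq, mem_union, mem_Ioc, min_le_iff]
  constructor
  · rintro ⟨hc, hmin⟩
    rcases le_or_gt a b with hab | hba
    · exact Or.inl (Or.inl (hc hab))
    have hbr : b ≤ r := hmin.elim hba.le.trans id
    rcases le_or_gt b s with hbs | hsb
    · exact Or.inl (Or.inr hbs)
    · exact Or.inr ⟨hba, hsb, hbr⟩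
  · rintro ((has | hbs) | ⟨hba, -, hbr⟩)
    · exact ⟨fun _ => has, Or.inl (has.trans hsr)⟩
    · exact ⟨fun hab => (hab.trans hbs), Or.inr (hbs.trans hsr)⟩
    · exact ⟨fun hab => absurd hab hba.not_ge, Or.inr hbr⟩

lemma disjoint_min_le_lt_and_mem_Ioc (s r : α) :
    Disjoint {q : α × α | min q.1 q.2 ≤ s} {q | q.2 < q.1 ∧ q.2 ∈ Ioc s r} := by
  rw [Set.disjoint_left]
  rintro ⟨a, b⟩ hmin ⟨hba, hsb, -⟩
  exact (min_le_iff.mp hmin).elim (fun has => (hba.trans_le has).not_gt hsb)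
    (fun hbs => hbs.not_gt hsb)

end Order

section IndepPair

variable {Ω α : Type*} [MeasurableSpace Ω] {P : Measure Ω} [IsProbabilityMeasure P]
  [LinearOrder α] [TopologicalSpace α] [OrderClosedTopology α] [MeasurableSpace α]
  [OpensMeasurableSpace α] {T U : Ω → α}

lemma measurableSet_jointMaxSet [SecondCountableTopology α] (s r : α) :
    MeasurableSet (jointMaxSet s r) :=
  ((measurableSet_le measurable_fst measurable_snd).imp (measurable_fst measurableSet_Iic)).inter
    ((measurable_fst.min measurable_snd) measurableSet_Iic)

lemma measure_lt_eq_ofReal_one_sub (hT : Measurable T) {a : α} {c : ℝ} (hc : 0 ≤ c)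
    (h : P {ω | T ω ≤ a} = ENNReal.ofReal c) :
    P {ω | a < T ω} = ENNReal.ofReal (1 - c) := by
  have hcompl : {ω | a < T ω} = {ω | T ω ≤ a}ᶜ := by ext; simp
  rw [hcompl, prob_compl_eq_one_sub (s := {ω | T ω ≤ a}) (hT measurableSet_Iic), h, ENNReal.ofReal_sub _ hc,
    ENNReal.ofReal_one]

lemma ProbabilityTheory.IndepFun.measure_min_le (hTU : IndepFun T U P) (hT : Measurable T) (hU : Measurable U)
    (s : α) : P {ω | min (T ω) (U ω) ≤ s} = 1 - P {ω | s < T ω} * P {ω | s < U ω} := by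
  have hcompl : {ω | min (T ω) (U ω) ≤ s} = (T ⁻¹' Ioi s ∩ U ⁻¹' Ioi s)ᶜ := by
    ext; simp [or_iff_not_imp_left]
  rw [hcompl, prob_compl_eq_one_sub ((hT measurableSet_Ioi).inter (hU measurableSet_Ioi)),
    hTU.measure_inter_preimage_eq_mul _ _ measurableSet_Ioi measurableSet_Ioi]
  rfl

lemma ProbabilityTheory.IndepFun.measure_lt_and_mem [SecondCountableTopology α] (hTU : IndepFun T U P)
    (hT : Measurable T) (hU : Measurable U) {I : Set α} (hI : MeasurableSet I) :
    P {ω | U ω < T ω ∧ U ω ∈ I} = ∫⁻ u in I, P.map T (Ioi u) ∂(P.map U) := by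
  set S : Set (α × α) := {q | q.2 < q.1 ∧ q.2 ∈ I}
  have hS : MeasurableSet S :=
    (measurableSet_lt measurable_snd measurable_fst).inter (measurable_snd hI)
  have hsection : (fun u => P.map T ((fun a => (a, u)) ⁻¹' S))
      = I.indicator fun u => P.map T (Ioi u) := by
    funext u
    by_cases hu : u ∈ I <;> simp [S, hu, Ioi]
  calc P {ω | U ω < T ω ∧ U ω ∈ I} = P.map (fun ω => (T ω, U ω)) S :=
        (Measure.map_apply (hT.prodMk hU) hS).symm
    _ = ((P.map T).prod (P.map U)) S := by
        rw [(indepFun_iff_map_prod_eq_prod_map_map hT.aemeasurable hU.aemeasurable).mp hTU]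
    _ = ∫⁻ u, I.indicator (fun u => P.map T (Ioi u)) u ∂(P.map U) := by
        rw [Measure.prod_apply_symm hS, hsection]
    _ = ∫⁻ u in I, P.map T (Ioi u) ∂(P.map U) := lintegral_indicator hI _

end IndepPair

section CensoredPair

variable {Ω : Type*} [MeasurableSpace Ω] {P : Measure Ω} [IsProbabilityMeasure P]
  {T U : Ω → ℝ≥0∞}

lemma map_eq_map_ofReal_of_measure_le_ofReal (hU : Measurable U) (ν : Measure ℝ)
    [IsProbabilityMeasure ν] (h : ∀ x, 0 ≤ x → P {ω | U ω ≤ ENNReal.ofReal x} = ν (Iic x)) :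
    P.map U = ν.map ENNReal.ofReal := by
  have := Measure.isProbabilityMeasure_map (μ := P) hU.aemeasurable
  have := Measure.isProbabilityMeasure_map (μ := ν) ENNReal.measurable_ofReal.aemeasurable
  refine Measure.ext_of_Iic _ _ fun a => ?_
  rcases eq_or_ne a ⊤ with rfl | ha
  · simp only [Iic_top, measure_univ]
  have hpre : ENNReal.ofReal ⁻¹' Iic a = Iic a.toReal := by
    ext r
    exact ENNReal.ofReal_le_iff_le_toReal ha
  rw [Measure.map_apply hU measurableSet_Iic,
    Measure.map_apply ENNReal.measurable_ofReal measurableSet_Iic, hpre,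
    ← h _ ENNReal.toReal_nonneg, ENNReal.ofReal_toReal ha]
  rfl

variable {Fs G : ℝ → ℝ} {μG : Measure ℝ} [IsProbabilityMeasure μG]

lemma measure_lt_and_mem_Ioc_eq_integral (hT : Measurable T) (hU : Measurable U)
    (hTU : IndepFun T U P) (hFsm : Measurable Fs) (hFs : ∀ z, Fs z ∈ Icc (0 : ℝ) 1)
    (hμG : ∀ x, μG (Iic x) = ENNReal.ofReal (G x))
    (hTd : ∀ x, 0 ≤ x → P {ω | T ω ≤ ENNReal.ofReal x} = ENNReal.ofReal (Fs x))
    (hUd : ∀ x, 0 ≤ x → P {ω | U ω ≤ ENNReal.ofReal x} = ENNReal.ofReal (G x))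
    {t x : ℝ} (ht : 0 ≤ t) :
    P {ω | U ω < T ω ∧ U ω ∈ Ioc (ENNReal.ofReal t) (ENNReal.ofReal x)}
      = ENNReal.ofReal (∫ z in Ioc t x, (1 - Fs z) ∂μG) := by
  have hlaw : P.map U = μG.map ENNReal.ofReal :=
    map_eq_map_ofReal_of_measure_le_ofReal hU μG fun x hx => (hUd x hx).trans (hμG x).symm
  have hsurv : ∀ r ∈ Ioc t x, P.map T (Ioi (ENNReal.ofReal r)) = ENNReal.ofReal (1 - Fs r) :=
    fun r hr => by
      rw [Measure.map_apply hT measurableSet_Ioi]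
      exact measure_lt_eq_ofReal_one_sub hT (hFs r).1 (hTd r (ht.trans hr.1.le))
  have hsurv_meas : Measurable fun u => P.map T (Ioi u) :=
    Antitone.measurable fun _ _ huv => measure_mono (Ioi_subset_Ioi huv)
  have hint : IntegrableOn (fun z => 1 - Fs z) (Ioc t x) μG :=
    Measure.integrableOn_of_bounded (M := 1) (measure_ne_top _ _)
      (measurable_const.sub hFsm).aestronglyMeasurable
      (ae_of_all _ fun z => by
        rw [Real.norm_eq_abs, abs_le]
        constructor <;> linarith [(hFs z).1, (hFs z).2])
  rw [hTU.measure_lt_and_mem hT hU measurableSet_Ioc, hlaw,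
    setLIntegral_map measurableSet_Ioc hsurv_meas ENNReal.measurable_ofReal,
    ENNReal.preimage_ofReal_Ioc ht, setLIntegral_congr_fun measurableSet_Ioc hsurv,
    ofReal_integral_eq_lintegral_ofReal hint (ae_of_all _ fun z => by simp [(hFs z).2])]

lemma measure_preimage_jointMaxSet (hT : Measurable T) (hU : Measurable U)
    (hTU : IndepFun T U P) (hFsm : Measurable Fs) (hFs : ∀ z, Fs z ∈ Icc (0 : ℝ) 1)
    (hG : ∀ z, G z ∈ Icc (0 : ℝ) 1) (hμG : ∀ x, μG (Iic x) = ENNReal.ofReal (G x))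
    (hTd : ∀ x, 0 ≤ x → P {ω | T ω ≤ ENNReal.ofReal x} = ENNReal.ofReal (Fs x))
    (hUd : ∀ x, 0 ≤ x → P {ω | U ω ≤ ENNReal.ofReal x} = ENNReal.ofReal (G x))
    {t x : ℝ} (ht : 0 ≤ t) (htx : t ≤ x) :
    P ((fun ω => (T ω, U ω)) ⁻¹' jointMaxSet (ENNReal.ofReal t) (ENNReal.ofReal x))
      = ENNReal.ofReal ((∫ z in Ioc t x, (1 - Fs z) ∂μG) + (1 - (1 - Fs t) * (1 - G t))) := by
  obtain ⟨hFt0, hFt1⟩ := hFs t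
  obtain ⟨hGt0, hGt1⟩ := hG t
  have hH : P {ω | min (T ω) (U ω) ≤ ENNReal.ofReal t}
      = ENNReal.ofReal (1 - (1 - Fs t) * (1 - G t)) := by
    rw [hTU.measure_min_le hT hU, measure_lt_eq_ofReal_one_sub hT hFt0 (hTd t ht),
      measure_lt_eq_ofReal_one_sub hU hGt0 (hUd t ht), ← ENNReal.ofReal_mul (by linarith),
      ENNReal.ofReal_sub _ (by nlinarith), ENNReal.ofReal_one]
  have hH_nonneg : 0 ≤ 1 - (1 - Fs t) * (1 - G t) := by nlinarith
  have hint_nonneg : 0 ≤ ∫ z in Ioc t x, (1 - Fs z) ∂μG :=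
    setIntegral_nonneg measurableSet_Ioc fun z _ => by linarith [(hFs z).2]
  rw [jointMaxSet_eq_union (ENNReal.ofReal_le_ofReal htx), preimage_union,
    measure_union (Disjoint.preimage _ (disjoint_min_le_lt_and_mem_Ioc _ _))
      ((hT.prodMk hU) ((measurableSet_lt measurable_snd measurable_fst).inter
        (measurable_snd measurableSet_Ioc))),
    ENNReal.ofReal_add hint_nonneg hH_nonneg, add_comm]
  exact congrArg₂ _ (measure_lt_and_mem_Ioc_eq_integral hT hU hTU hFsm hFs hμG hTd hUd ht) hH

end CensoredPair

theorem stmt_6_general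
    (F G : ℝ → ℝ) (p : ℝ) (hp0 : 0 < p) (hp1 : p ≤ 1)
    (hFm : Monotone F) (hFc : Continuous F) (hF0 : ∀ x ≤ (0:ℝ), F x = 0)
    (hFtop : Tendsto F atTop (nhds 1))
    (hGm : Monotone G) (hGc : Continuous G) (hG0 : ∀ x ≤ (0:ℝ), G x = 0)
    (hGtop : Tendsto G atTop (nhds 1))
    (μG : Measure ℝ)
    (hμG : μG = (stieltjesOf G hGm hGc).measure)
    {Ω : Type*} [MeasurableSpace Ω] (P : Measure Ω) [IsProbabilityMeasure P]
    (n : ℕ)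
    (Tstar U : Fin n → Ω → ℝ≥0∞)
    (hTmeas : ∀ i, Measurable (Tstar i)) (hUmeas : ∀ i, Measurable (U i))
    (hTd : ∀ i, ∀ x : ℝ, 0 ≤ x → P {ω | Tstar i ω ≤ ENNReal.ofReal x} = ENNReal.ofReal (p * F x))
    (hUd : ∀ i, ∀ x : ℝ, 0 ≤ x → P {ω | U i ω ≤ ENNReal.ofReal x} = ENNReal.ofReal (G x))
    (hTU : ∀ i, IndepFun (Tstar i) (U i) P)
    (hiid : iIndepFun (fun i ω => (Tstar i ω, U i ω)) P)
    (τH : ℝ)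
    : ∀ t x : ℝ, 0 ≤ t → t < x → x ≤ τH →
      P {ω | (⨆ i, ⨆ (_ : Tstar i ω ≤ U i ω), Tstar i ω) ≤ ENNReal.ofReal t ∧
             (⨆ i, min (Tstar i ω) (U i ω)) ≤ ENNReal.ofReal x} =
        ENNReal.ofReal ((∫ z in Set.Ioc t x, (1 - p * F z) ∂μG)
            + (1 - (1 - p * F t) * (1 - G t))) ^ n := by
  intro t x ht htx _
  have hFbot := tendsto_atBot_of_eq_zero_of_nonpos hF0
  have hGbot := tendsto_atBot_of_eq_zero_of_nonpos hG0
  have hpF : ∀ z, p * F z ∈ Icc (0 : ℝ) 1 := fun z =>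
    ⟨mul_nonneg hp0.le (hFm.le_of_tendsto hFbot z),
      mul_le_one₀ hp1 (hFm.le_of_tendsto hFbot z) (hFm.ge_of_tendsto hFtop z)⟩
  have hGI : ∀ z, G z ∈ Icc (0 : ℝ) 1 := fun z =>
    ⟨hGm.le_of_tendsto hGbot z, hGm.ge_of_tendsto hGtop z⟩
  have := (stieltjesOf G hGm hGc).isProbabilityMeasure hGbot hGtop
  subst hμG
  have hevent : {ω | (⨆ i, ⨆ (_ : Tstar i ω ≤ U i ω), Tstar i ω) ≤ ENNReal.ofReal t ∧
      (⨆ i, min (Tstar i ω) (U i ω)) ≤ ENNReal.ofReal x} = ⋂ i ∈ Finset.univ,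
      (fun ω => (Tstar i ω, U i ω)) ⁻¹' jointMaxSet (ENNReal.ofReal t) (ENNReal.ofReal x) := by
    ext ω
    simp [jointMaxSet, forall_and]
  rw [hevent, hiid.measure_inter_preimage_eq_mul _ fun _ _ => measurableSet_jointMaxSet _ _]
  simp only [measure_preimage_jointMaxSet (hTmeas _) (hUmeas _) (hTU _)
    (hFc.measurable.const_mul p) hpF hGI (stieltjesOf_measure_Iic hGm hGc hGbot) (hTd _) (hUd _)
    ht htx.le, Finset.prod_const, Finset.card_univ, Fintype.card_fin]

/-- for 0 ≤ t < x ≤ τ_H,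
P(M_u(n) ≤ t, M(n) ≤ x) = (∫_t^x F̄*(z) dG(z) + H(t))^n. -/
theorem stmt_6
    (F G : ℝ → ℝ) (p : ℝ) (hp0 : 0 < p) (hp1 : p ≤ 1)
    (hFm : Monotone F) (hFc : Continuous F) (hF0 : ∀ x ≤ (0:ℝ), F x = 0)
    (hFtop : Tendsto F atTop (nhds 1))
    (hGm : Monotone G) (hGc : Continuous G) (hG0 : ∀ x ≤ (0:ℝ), G x = 0)
    (hGtop : Tendsto G atTop (nhds 1))
    (μF μG : Measure ℝ)
    (hμF : μF = (stieltjesOf F hFm hFc).measure)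
    (hμG : μG = (stieltjesOf G hGm hGc).measure)
    {Ω : Type*} [MeasurableSpace Ω] (P : Measure Ω) [IsProbabilityMeasure P]
    (n : ℕ) (hn : 0 < n)
    (Tstar U : Fin n → Ω → ℝ≥0∞)
    (hTmeas : ∀ i, Measurable (Tstar i)) (hUmeas : ∀ i, Measurable (U i))
    (hTd : ∀ i, ∀ x : ℝ, 0 ≤ x → P {ω | Tstar i ω ≤ ENNReal.ofReal x} = ENNReal.ofReal (p * F x))
    (hTinf : ∀ i, P {ω | Tstar i ω = ⊤} = ENNReal.ofReal (1 - p))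
    (hUd : ∀ i, ∀ x : ℝ, 0 ≤ x → P {ω | U i ω ≤ ENNReal.ofReal x} = ENNReal.ofReal (G x))
    (hTU : ∀ i, IndepFun (Tstar i) (U i) P)
    (hiid : iIndepFun (fun i ω => (Tstar i ω, U i ω)) P)
    (τH : ℝ) (hτH0 : 0 < τH)
    (hτHlt : ∀ x, 0 ≤ x → x < τH → 0 < (1 - p * F x) * (1 - G x))
    (hτHend : (1 - p * F τH) * (1 - G τH) = 0)
    : ∀ t x : ℝ, 0 ≤ t → t < x → x ≤ τH →
      P {ω | (⨆ i, ⨆ (_ : Tstar i ω ≤ U i ω), Tstar i ω) ≤ ENNReal.ofReal t ∧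
             (⨆ i, min (Tstar i ω) (U i ω)) ≤ ENNReal.ofReal x} =
        ENNReal.ofReal ((∫ z in Set.Ioc t x, (1 - p * F z) ∂μG)
            + (1 - (1 - p * F t) * (1 - G t))) ^ n :=
  stmt_6_general F G p hp0 hp1 hFm hFc hF0 hFtop hGm hGc hG0 hGtop μG hμG P n Tstar U hTmeas hUmeas
    hTd hUd hTU hiid τH
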